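/- arXiv:2408.17335 — 2 statements merged into one kernel-verified Lean document; each statement's English description precedes it below -/
import Mathlib

section
/- Suppose G ∈ (1/N, 1), E⁰ < 1/G, M > 0, A > 0, and f satisfies the production assumptions. The elite strictly prefers extending property rights to E = 1/G and providing public goods over keeping E = E⁰ and expropriating if and only if E⁰·( G + (G − 1/N)·A·f(I_d*)/M ) > 1, where I_d* = (f')^{-1}(1/(G·A)). (With the indifference convention, extension occurs iff the weak inequality holds.) -/
/-- Proposition 1 threshold: the elite (strictly) prefers extending property
rights to E = 1/G and providing public goods over keeping E = E⁰ and
expropriating iff E⁰·(G + (G − 1/N)·A·f(I_d*)/M) (strictly) exceeds 1. -/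
theorem extension_threshold (f : ℝ → ℝ) (N E0 M A G Id : ℝ)
    (hN : 0 < N) (hE0 : 0 < E0) (hM : 0 < M) (hA : 0 < A)
    (hG1 : 1 / N < G) (hG2 : G < 1) (hE0G : E0 < 1 / G)
    (hfoc : deriv f Id = 1 / (G * A)) :
    ((N - 1 / G) * (A * f Id + M) * G > (N - E0) * M / E0 ↔
      E0 * (G + (G - 1 / N) * (A * f Id) / M) > 1) ∧
    ((N - 1 / G) * (A * f Id + M) * G ≥ (N - E0) * M / E0 ↔
      E0 * (G + (G - 1 / N) * (A * f Id) / M) ≥ 1) := by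
  have hG : 0 < G := lt_trans (by positivity) hG1
  have hkey : (N - 1 / G) * (A * f Id + M) * G - (N - E0) * M / E0
      = (M * N / E0) * (E0 * (G + (G - 1 / N) * (A * f Id) / M) - 1) := by
    field_simp
    ring
  have hpos : 0 < M * N / E0 := by positivity
  constructor
  · rw [gt_iff_lt, gt_iff_lt, ← sub_pos, ← sub_pos (b := (1:ℝ)), hkey]
    constructor
    · intro h; nlinarith
    · intro h; positivity
  · rw [ge_iff_le, ge_iff_le, ← sub_nonneg, ← sub_nonneg (b := (1:ℝ)), hkey]
    constructor
    · intro h; nlinarith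
    · intro h; positivity
end

section
/- Welfare non-monotonicity in M: define Y(M) = N·(N − 1/G)·(A f(I_d*) + M)·G + (1/G)·Π⁰ − (N−1/G)·I_d* if Φ(M) ≥ 1, and Y(M) = (N − E⁰)·M + E⁰·Π⁰ otherwise, where Φ(M) = E⁰·(G + (G−1/N)·A f(I_d*)/M) and Π⁰ = A f(I_e*) + M − I_e* (suitably adjusted). Then Y is strictly increasing in M on each regime's interior, but has a strictly negative jump at the threshold M† where Φ(M†) = 1, provided the inclusive regime's output strictly exceeds the extractive regime's output for M < M† near the threshold. Formally: Y is strictly increasing on (0, M†) and on (M†, ∞), and lim_{M↓M†} Y(M) < lim_{M↑M†} Y(M) under the stated output-gap condition. -/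
open Filter Topology

/-- Welfare non-monotonicity in M: with K = A·f(I_d*), fe = A·f(I_e*),
threshold Md = E⁰·(G − 1/N)·K/(1 − E⁰·G), inclusive output
YP(M) and extractive output YS(M), total output Y(M) (inclusive iff
Φ(M) ≥ 1) is strictly increasing on (0, Md) and on (Md, ∞), but jumps down at
Md: the right limit YS(Md) is strictly below the left limit YP(Md), given the
output-gap condition at the threshold. -/
theorem welfare_nonmonotone_in_M (N G E0 A K fe Ie Id : ℝ)
    (hN : 0 < N) (hG1 : 1 / N < G) (hG2 : G < 1)
    (hE0 : 0 < E0) (hE0G : E0 * G < 1) (hK : 0 < K)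
    (hNG : 1 / G < N) (hE0N : E0 < N) (hId : 0 ≤ Id)
    (YP YS Y : ℝ → ℝ)
    (hYP : ∀ M, YP M =
      N * (N - 1 / G) * (K + M) * G + (1 / G) * (A * fe + M - Ie)
        - (N - 1 / G) * Id)
    (hYS : ∀ M, YS M = (N - E0) * M + E0 * (A * fe + M - Ie))
    (hY : ∀ M, Y M =
      if 1 ≤ E0 * (G + (G - 1 / N) * K / M) then YP M else YS M)
    (Md : ℝ) (hMd : Md = E0 * (G - 1 / N) * K / (1 - E0 * G))
    (hgap : YS Md < YP Md) :
    StrictMonoOn Y (Set.Ioo 0 Md) ∧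
    StrictMonoOn Y (Set.Ioi Md) ∧
    Tendsto Y (𝓝[>] Md) (𝓝 (YS Md)) ∧
    Tendsto Y (𝓝[<] Md) (𝓝 (YP Md)) ∧
    YS Md < YP Md := by
  have hd : (0:ℝ) < 1 - E0 * G := by linarith
  have hGN : (0:ℝ) < G - 1 / N := by linarith
  have hGpos : (0:ℝ) < G := lt_trans (by positivity) hG1
  have hNG' : (0:ℝ) < N - 1 / G := by linarith
  have hMd0 : 0 < Md := by rw [hMd]; positivity
  -- characterization of the inclusive condition
  have hcond : ∀ M : ℝ, 0 < M →
      ((1 ≤ E0 * (G + (G - 1 / N) * K / M)) ↔ M ≤ Md) := by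
    intro M hM
    have key : E0 * (G + (G - 1 / N) * K / M)
        = E0 * G + (E0 * (G - 1 / N) * K) / M := by
      field_simp
    rw [key, hMd]
    constructor
    · intro h
      rw [le_div_iff₀ hd]
      have h2 : (1 - E0 * G) ≤ (E0 * (G - 1 / N) * K) / M := by linarith
      rw [le_div_iff₀ hM] at h2
      nlinarith [h2]
    · intro h
      rw [le_div_iff₀ hd] at h
      have h2 : (1 - E0 * G) ≤ (E0 * (G - 1 / N) * K) / M := by
        rw [le_div_iff₀ hM]; nlinarith [h]
      linarith
  have hYeqP : ∀ M : ℝ, 0 < M → M ≤ Md → Y M = YP M := by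
    intro M hM hle
    rw [hY M, if_pos ((hcond M hM).2 hle)]
  have hYeqS : ∀ M : ℝ, Md < M → Y M = YS M := by
    intro M hM
    have hM0 : 0 < M := lt_trans hMd0 hM
    rw [hY M, if_neg]
    intro hcontra
    exact absurd ((hcond M hM0).1 hcontra) (not_le.2 hM)
  refine ⟨?_, ?_, ?_, ?_, hgap⟩
  · intro a ha b hb hab
    rw [hYeqP a ha.1 (le_of_lt ha.2), hYeqP b hb.1 (le_of_lt hb.2), hYP, hYP]
    nlinarith [mul_pos (mul_pos (mul_pos hN hNG') hGpos) (sub_pos.2 hab),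
      mul_pos (one_div_pos.2 hGpos) (sub_pos.2 hab)]
  · intro a ha b hb hab
    rw [hYeqS a ha, hYeqS b hb, hYS, hYS]
    nlinarith [mul_pos hN (sub_pos.2 hab)]
  · have hcont : Continuous YS := by
      have : YS = fun M => (N - E0) * M + E0 * (A * fe + M - Ie) := funext hYS
      rw [this]; fun_prop
    refine Tendsto.congr' ?_ ((hcont.tendsto Md).mono_left nhdsWithin_le_nhds)
    filter_upwards [self_mem_nhdsWithin] with x hx
    exact (hYeqS x hx).symm
  · have hcont : Continuous YP := by
      have : YP = fun M => N * (N - 1 / G) * (K + M) * G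
          + (1 / G) * (A * fe + M - Ie) - (N - 1 / G) * Id := funext hYP
      rw [this]; fun_prop
    refine Tendsto.congr' ?_ ((hcont.tendsto Md).mono_left nhdsWithin_le_nhds)
    have hpos : ∀ᶠ x in 𝓝[<] Md, 0 < x :=
      eventually_nhdsWithin_of_eventually_nhds (eventually_gt_nhds hMd0)
    filter_upwards [self_mem_nhdsWithin, hpos] with x hx hx0
    exact (hYeqP x hx0 (le_of_lt hx)).symm
end
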